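/- arXiv:1504.00389 — 2 statements merged into one kernel-verified Lean document; each statement's English description precedes it below -/
import Mathlib

section
/- Let p be a prime and f : ℕ → ℕ. For all k, s ∈ ℕ and every j with 0 ≤ j < p, one has binom(k + s·p, j)_f ≡ binom(k,j)_f · f(0)^{s·p} (mod p). -/
/-- The extended binomial coefficient `binom(k,n)_f`: the sum, over all
`k`-tuples `(π₁,…,π_k)` of nonnegative integers with `π₁ + ⋯ + π_k = n`,
of the products `f(π₁)⋯f(π_k)`. It counts the `f`-weighted integer
compositions of `n` with exactly `k` parts. -/
def extBinom (f : ℕ → ℕ) (k n : ℕ) : ℕ :=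
  ∑ π ∈ Finset.Nat.antidiagonalTuple k n, ∏ i, f (π i)

/-!
Modulo `p`, `binom(k, n)_f` is the coefficient of `X ^ n` in `F ^ k`, where `F = ∑ f(m) X ^ m`
over `ZMod p`. Since `X` divides `F - f(0)`, the Frobenius identity `(F - f(0)) ^ p = F ^ p - f(0) ^ p`
shows `F ^ p ≡ f(0) ^ p` modulo `X ^ p`, hence `F ^ (k + s p) ≡ F ^ k f(0) ^ (s p)` modulo `X ^ p`,
and the two sides have the same coefficients in degrees below `p`.
-/

open Finset PowerSeries

theorem Finset.sum_finsuppAntidiag_eq_sum_piAntidiag {ι μ M : Type*} [DecidableEq ι]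
    [AddCommMonoid μ] [HasAntidiagonal μ] [DecidableEq μ] [AddCommMonoid M]
    (s : Finset ι) (n : μ) (g : (ι → μ) → M) :
    ∑ l ∈ finsuppAntidiag s n, g l = ∑ l ∈ piAntidiag s n, g l := by
  rw [finsuppAntidiag, sum_map]
  exact sum_attach (piAntidiag s n) g

namespace PowerSeries

variable {R : Type*}

theorem coeff_pow_eq_sum_antidiagonalTuple [CommSemiring R] (φ : R⟦X⟧) (k n : ℕ) :
    coeff n (φ ^ k) = ∑ l ∈ Nat.antidiagonalTuple k n, ∏ i, coeff (l i) φ := by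
  rw [← Fin.prod_const, coeff_prod,
    sum_finsuppAntidiag_eq_sum_piAntidiag (g := fun l => ∏ i, coeff (l i) φ),
    piAntidiag_univ_fin_eq_antidiagonalTuple]

instance expChar [CommSemiring R] (p : ℕ) [ExpChar R p] : ExpChar R⟦X⟧ p :=
  expChar_of_injective_ringHom C_injective p

variable [CommRing R] (p : ℕ) [ExpChar R p]

theorem X_pow_dvd_pow_mul_sub_C (φ : R⟦X⟧) (s : ℕ) :
    X ^ p ∣ φ ^ (s * p) - C (constantCoeff φ ^ (s * p)) := by
  have hX : X ∣ φ - C (constantCoeff φ) := X_dvd_iff.mpr (by simp)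
  have hXp : X ^ p ∣ φ ^ p - C (constantCoeff φ ^ p) := by
    rw [map_pow, ← sub_pow_expChar]
    exact pow_dvd_pow_of_dvd hX p
  rw [pow_mul', mul_comm, pow_mul, map_pow]
  exact hXp.trans (sub_dvd_pow_sub_pow _ _ s)

theorem coeff_pow_add_mul_expChar (φ : R⟦X⟧) (k s : ℕ) {j : ℕ} (hj : j < p) :
    coeff j (φ ^ (k + s * p)) = coeff j (φ ^ k) * constantCoeff φ ^ (s * p) := by
  obtain ⟨ψ, hψ⟩ := X_pow_dvd_pow_mul_sub_C p φ s
  rw [pow_add, ← coeff_mul_C, ← sub_eq_zero, ← map_sub, ← mul_sub, hψ, mul_left_comm,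
    X_pow_dvd_iff.mp (dvd_mul_right _ _) j hj]

end PowerSeries

theorem natCast_extBinom {R : Type*} [CommSemiring R] (f : ℕ → ℕ) (k n : ℕ) :
    (extBinom f k n : R) = coeff n (mk (fun m => (f m : R)) ^ k) := by
  simp [coeff_pow_eq_sum_antidiagonalTuple, extBinom]

theorem extBinom_add_mul_prime (p : ℕ) (hp : p.Prime) (f : ℕ → ℕ)
    (k s j : ℕ) (hj : j < p) :
    extBinom f (k + s * p) j ≡ extBinom f k j * f 0 ^ (s * p) [MOD p] := by
  have : Fact p.Prime := ⟨hp⟩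
  rw [← ZMod.natCast_eq_natCast_iff, Nat.cast_mul, natCast_extBinom, natCast_extBinom,
    coeff_pow_add_mul_expChar p _ k s hj]
  simp
end

section
/- (Babbage's congruence) Let p be a prime and f : ℕ → ℕ. Define g : ℕ → ℕ by g(r) = binom(p, r·p)_f. Then for all nonnegative integers n and m, binom(n·p, m·p)_f ≡ binom(n,m)_g (mod p²). -/
/-!
Since `binom(k, ·)_f` is the coefficient sequence of `(∑ f(r) Xʳ)^k`, we get
`binom(n·p, ·)_f = binom(n, ·)_T` with `T = binom(p, ·)_f`. By symmetry of the coordinates,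
`s · T(s) = p · ∑ π₁ f(π₁)⋯f(π_p)`, so `p ∣ T(s)` whenever `p ∤ s`. In
`binom(n, m·p)_T`, the tuples all of whose entries are multiples of `p` give exactly
`binom(n, m)_g`; any other tuple summing to `m·p` has at least two entries prime to `p`,
so its product is divisible by `p²`.
-/

open Finset PowerSeries

theorem extBinom_eq_coeff_pow (f : ℕ → ℕ) (k n : ℕ) :
    extBinom f k n = coeff n (mk f ^ k) := by
  classical
  rw [← Fin.prod_const, coeff_prod, extBinom]
  symm
  refine Finset.sum_equiv Finsupp.equivFunOnFinite (fun π => ?_) fun π _ => ?_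
  · simp [Nat.mem_antidiagonalTuple, mem_finsuppAntidiag]
  · simp

theorem mk_extBinom (f : ℕ → ℕ) (k : ℕ) : mk (extBinom f k) = mk f ^ k := by
  ext n
  rw [coeff_mk, extBinom_eq_coeff_pow]

theorem extBinom_mul (f : ℕ → ℕ) (l k n : ℕ) :
    extBinom f (l * k) n = extBinom (extBinom f k) l n := by
  rw [extBinom_eq_coeff_pow, extBinom_eq_coeff_pow, mk_extBinom, pow_mul']

theorem Finset.Nat.sum_antidiagonalTuple_comp_perm {M : Type*} [AddCommMonoid M] {k : ℕ}
    (σ : Equiv.Perm (Fin k)) (n : ℕ) (g : (Fin k → ℕ) → M) :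
    ∑ π ∈ Nat.antidiagonalTuple k n, g (π ∘ σ) = ∑ π ∈ Nat.antidiagonalTuple k n, g π := by
  refine Finset.sum_nbij' (· ∘ σ) (· ∘ σ.symm) ?_ ?_ ?_ ?_ fun _ _ => rfl <;>
    simp [Nat.mem_antidiagonalTuple, Function.comp_def, Equiv.sum_comp]

theorem mul_extBinom_eq_mul_sum (f : ℕ → ℕ) (k s : ℕ) (a : Fin k) :
    s * extBinom f k s = k * ∑ π ∈ Nat.antidiagonalTuple k s, π a * ∏ j, f (π j) := by
  have h_sum : s * extBinom f k s =
      ∑ i : Fin k, ∑ π ∈ Nat.antidiagonalTuple k s, π i * ∏ j, f (π j) := by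
    rw [extBinom, mul_sum, sum_comm]
    refine sum_congr rfl fun π hπ => ?_
    rw [← (Nat.mem_antidiagonalTuple.mp hπ), sum_mul]
  have h_swap (i : Fin k) : ∑ π ∈ Nat.antidiagonalTuple k s, π i * ∏ j, f (π j) =
      ∑ π ∈ Nat.antidiagonalTuple k s, π a * ∏ j, f (π j) := by
    rw [← Nat.sum_antidiagonalTuple_comp_perm (Equiv.swap i a)]
    refine sum_congr rfl fun π _ => ?_
    simp only [Function.comp_apply, Equiv.swap_apply_left]
    rw [Equiv.prod_comp (Equiv.swap i a) fun j => f (π j)]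
  rw [h_sum, sum_congr rfl fun i _ => h_swap i, sum_const, card_univ, Fintype.card_fin,
    smul_eq_mul]

theorem Nat.Prime.dvd_extBinom {p : ℕ} (hp : p.Prime) (f : ℕ → ℕ) {s : ℕ} (hs : ¬ p ∣ s) :
    p ∣ extBinom f p s :=
  (hp.dvd_mul.mp (Dvd.intro _ (mul_extBinom_eq_mul_sum f p s ⟨0, hp.pos⟩).symm)).resolve_left hs

theorem Fintype.exists_ne_not_dvd_of_dvd_sum {ι : Type*} [Fintype ι] {p : ℕ} {σ : ι → ℕ}
    (h_sum : p ∣ ∑ i, σ i) {a : ι} (ha : ¬ p ∣ σ a) : ∃ b, b ≠ a ∧ ¬ p ∣ σ b := by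
  classical
  by_contra! h
  have h_rest : p ∣ ∑ i ∈ univ.erase a, σ i := dvd_sum fun i hi => h i (ne_of_mem_erase hi)
  rw [← add_sum_erase _ _ (mem_univ a)] at h_sum
  exact ha ((Nat.dvd_add_left h_rest).mp h_sum)

theorem sum_filter_forall_dvd_antidiagonalTuple {p : ℕ} (hp : 0 < p) (g : ℕ → ℕ) (n m : ℕ) :
    ∑ σ ∈ (Nat.antidiagonalTuple n (m * p)).filter (fun σ => ∀ i, p ∣ σ i), ∏ i, g (σ i) =
      extBinom (fun r => g (r * p)) n m := by
  refine sum_nbij' (fun σ i => σ i / p) (fun τ i => τ i * p) ?_ ?_ ?_ ?_ ?_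
  · intro σ hσ
    simp only [mem_filter, Nat.mem_antidiagonalTuple] at hσ ⊢
    rw [← Nat.sum_div fun i _ => hσ.2 i, hσ.1, Nat.mul_div_cancel _ hp]
  · intro τ hτ
    simp only [mem_filter, Nat.mem_antidiagonalTuple] at hτ ⊢
    exact ⟨by rw [← sum_mul, hτ], fun i => dvd_mul_left p (τ i)⟩
  · intro σ hσ
    simp only [mem_filter] at hσ
    exact funext fun i => Nat.div_mul_cancel (hσ.2 i)
  · exact fun τ _ => funext fun i => Nat.mul_div_cancel _ hp
  · intro σ hσ
    simp only [mem_filter] at hσ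
    exact prod_congr rfl fun i _ => congrArg g (Nat.div_mul_cancel (hσ.2 i)).symm

theorem sq_dvd_prod_of_not_forall_dvd {p : ℕ} {g : ℕ → ℕ} (hg : ∀ s, ¬ p ∣ s → p ∣ g s)
    {n m : ℕ} {σ : Fin n → ℕ} (hσ : σ ∈ Nat.antidiagonalTuple n (m * p)) (h_ndvd : ¬ ∀ i, p ∣ σ i) :
    p ^ 2 ∣ ∏ i, g (σ i) := by
  obtain ⟨a, ha⟩ := not_forall.mp h_ndvd
  obtain ⟨b, hba, hb⟩ := Fintype.exists_ne_not_dvd_of_dvd_sum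
    ((Nat.mem_antidiagonalTuple.mp hσ).symm ▸ dvd_mul_left p m) ha
  calc p ^ 2 = p * p := sq p
    _ ∣ g (σ b) * g (σ a) := mul_dvd_mul (hg _ hb) (hg _ ha)
    _ = ∏ i ∈ {b, a}, g (σ i) := (prod_pair (f := fun i => g (σ i)) hba).symm
    _ ∣ ∏ i, g (σ i) := prod_dvd_prod_of_subset _ _ _ (subset_univ _)

theorem extBinom_mul_modEq_sq {p : ℕ} (hp : 0 < p) {g : ℕ → ℕ} (hg : ∀ s, ¬ p ∣ s → p ∣ g s)
    (n m : ℕ) : extBinom g n (m * p) ≡ extBinom (fun r => g (r * p)) n m [MOD p ^ 2] := by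
  rw [extBinom, ← sum_filter_add_sum_filter_not _ (fun σ => ∀ i, p ∣ σ i),
    sum_filter_forall_dvd_antidiagonalTuple hp]
  conv_rhs => rw [← add_zero (extBinom _ n m)]
  refine Nat.ModEq.add_left _ (Nat.modEq_zero_iff_dvd.mpr (dvd_sum fun σ hσ => ?_))
  rw [mem_filter] at hσ
  exact sq_dvd_prod_of_not_forall_dvd hg hσ.1 hσ.2

theorem extBinom_babbage (p : ℕ) (hp : p.Prime) (f : ℕ → ℕ) (n m : ℕ) :
    extBinom f (n * p) (m * p) ≡
      extBinom (fun r => extBinom f p (r * p)) n m [MOD p ^ 2] := by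
  rw [extBinom_mul]
  exact extBinom_mul_modEq_sq hp.pos (fun _ => hp.dvd_extBinom f) n m
end
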